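/- For the homomorphism \(\Phi : \mathbb{Z}^3 \to \mathbb{Z}_{20}\), \(\Phi(a,b,c) = 2a + 5b + 6c \bmod 20\), the images of the 20 points of \(V^* = \{v : d(v,V) \le 1\}\) with \(V = \{(0,0,0),(1,0,0),(0,1,0),(1,1,0)\}\) are exactly the 20 residues \(\{0,1,2,\ldots,19\}\), each occurring exactly once. -/

import Mathlib

def dist1 (u v : ℤ × ℤ × ℤ) : ℤ :=
  |u.1 - v.1| + |u.2.1 - v.2.1| + |u.2.2 - v.2.2|

def Vsq : Set (ℤ × ℤ × ℤ) := {(0,0,0), (1,0,0), (0,1,0), (1,1,0)}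

def Vstar : Set (ℤ × ℤ × ℤ) := {v | ∃ w ∈ Vsq, dist1 v w ≤ 1}

def Λ : SimpleGraph (ℤ × ℤ × ℤ) where
  Adj u v := dist1 u v = 1
  symm := by
    constructor
    intro u v h
    simpa [dist1, abs_sub_comm] using h
  loopless := by
    constructor
    intro u h
    simp [dist1] at h

def IsPDS (S : Set (ℤ × ℤ × ℤ)) : Prop :=
  ∀ v ∉ S, ∃! w, w ∈ S ∧ dist1 v w = 1

def comp (S : Set (ℤ × ℤ × ℤ)) (v : ℤ × ℤ × ℤ) : Set (ℤ × ℤ × ℤ) :=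
  {w | ∃ (hv : v ∈ S) (hw : w ∈ S), (Λ.induce S).Reachable ⟨v, hv⟩ ⟨w, hw⟩}

def AllComponentsFourCycles (S : Set (ℤ × ℤ × ℤ)) : Prop :=
  ∀ v ∈ S, (comp S v).ncard = 4 ∧
    ∀ w ∈ comp S v, {u ∈ comp S v | dist1 w u = 1}.ncard = 2

/-!
`V*` is the Minkowski sum of `V` with the `ℓ¹` unit ball `{0, ±e₁, ±e₂, ±e₃}`; it has exactly
20 points, on which `Φ` is injective by direct evaluation. Since `ZMod 20` also has 20 elements,
`Φ` maps `V*` onto it.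
-/

open scoped Pointwise

def l1UnitBall : Finset (ℤ × ℤ × ℤ) :=
  {0, (1, 0, 0), (-1, 0, 0), (0, 1, 0), (0, -1, 0), (0, 0, 1), (0, 0, -1)}

def unitSquare : Finset (ℤ × ℤ × ℤ) := {(0, 0, 0), (1, 0, 0), (0, 1, 0), (1, 1, 0)}

lemma dist1_le_one_iff {v w : ℤ × ℤ × ℤ} : dist1 v w ≤ 1 ↔ v - w ∈ l1UnitBall := by
  obtain ⟨a, b, c⟩ := v
  obtain ⟨x, y, z⟩ := w
  simp only [dist1, l1UnitBall, Finset.mem_insert, Finset.mem_singleton, Prod.mk_sub_mk,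
    Prod.ext_iff, Prod.fst_zero, Prod.snd_zero]
  rcases abs_cases (a - x) with h1 | h1 <;> rcases abs_cases (b - y) with h2 | h2 <;>
    rcases abs_cases (c - z) with h3 | h3 <;> omega

lemma Vsq_eq_unitSquare : Vsq = unitSquare := by
  ext
  simp [Vsq, unitSquare]

lemma Vstar_eq_unitSquare_add_l1UnitBall : Vstar = ↑(unitSquare + l1UnitBall) := by
  ext v
  simp only [Vstar, Finset.coe_add, ← Vsq_eq_unitSquare, Set.mem_add, Finset.mem_coe,
    dist1_le_one_iff]
  constructor
  · rintro ⟨w, hw, hd⟩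
    exact ⟨w, hw, v - w, hd, add_sub_cancel w v⟩
  · rintro ⟨w, hw, d, hd, rfl⟩
    exact ⟨w, hw, by simpa using hd⟩

lemma card_unitSquare_add_l1UnitBall : (unitSquare + l1UnitBall).card = 20 := by
  decide

theorem stmt16 :
    Set.BijOn (fun v : ℤ × ℤ × ℤ => (2 * v.1 + 5 * v.2.1 + 6 * v.2.2 : ZMod 20))
      Vstar Set.univ := by
  set Φ := fun v : ℤ × ℤ × ℤ => (2 * v.1 + 5 * v.2.1 + 6 * v.2.2 : ZMod 20)
  have hinj : Set.InjOn Φ ↑(unitSquare + l1UnitBall) := by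
    intro p hp q hq
    revert p q
    decide
  have hcard : (Finset.univ : Finset (ZMod 20)).card ≤ (unitSquare + l1UnitBall).card := by
    rw [Finset.card_univ, ZMod.card, card_unitSquare_add_l1UnitBall]
  have hsurj := Finset.surjOn_of_injOn_of_card_le Φ (fun _ _ ↦ Finset.mem_univ _) hinj hcard
  rw [Finset.coe_univ] at hsurj
  rw [Vstar_eq_unitSquare_add_l1UnitBall]
  exact ⟨Set.mapsTo_univ _ _, hinj, hsurj⟩
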